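/- Let Q : ℝ^d → ℝ^d be a contractive compressor with coefficient α ∈ (0,1], i.e., E[‖Q(x) − x‖²] ≤ (1−α)‖x‖² for all x. Let each F_i : ℝ^d → ℝ^d have L_i-Lipschitz gradient, and define L̄ := (1/n)∑_{i=1}^n L_i². Let random vectors satisfy g^i_{k+1} = g^i_k + Q(∇F_i(x_{k+1}) − g^i_k), where the randomness of Q is independent of x_1,…,x_{k+1}. Define G_k := (1/n)∑_{i=1}^n E[‖g^i_k − ∇F_i(x_k)‖²]. Then for any s > 0, G_{k+1} ≤ (1−α)(1+s) G_k + (1−α)(1+1/s) L̄ E[‖x_{k+1} − x_k‖²]. -/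

import Mathlib

open MeasureTheory

theorem stmt5 {Ω Ω' : Type*} [MeasurableSpace Ω] [MeasurableSpace Ω']
    (μ : Measure Ω) (μ' : Measure Ω')
    [IsProbabilityMeasure μ] [IsProbabilityMeasure μ']
    (d n : ℕ) (hn : 0 < n)
    (Q : Ω' → EuclideanSpace ℝ (Fin d) → EuclideanSpace ℝ (Fin d))
    (α : ℝ) (hα : α ∈ Set.Ioc (0 : ℝ) 1)
    (hQ : ∀ v : EuclideanSpace ℝ (Fin d), ∫ ς', ‖Q ς' v - v‖ ^ 2 ∂μ' ≤ (1 - α) * ‖v‖ ^ 2)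
    (F : Fin n → EuclideanSpace ℝ (Fin d) → ℝ) (L : Fin n → ℝ)
    (hLip : ∀ i, ∀ u v, ‖gradient (F i) u - gradient (F i) v‖ ≤ L i * ‖u - v‖)
    (x x' : Ω → EuclideanSpace ℝ (Fin d)) (g : Fin n → Ω → EuclideanSpace ℝ (Fin d))
    (s : ℝ) (hs : 0 < s)
    (hintG : ∀ i, Integrable (fun ς => ‖g i ς - gradient (F i) (x ς)‖ ^ 2) μ)
    (hintX : Integrable (fun ς => ‖x' ς - x ς‖ ^ 2) μ)
    (hintG' : ∀ i, Integrable
      (fun ρ : Ω × Ω' =>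
        ‖(g i ρ.1 + Q ρ.2 (gradient (F i) (x' ρ.1) - g i ρ.1)) - gradient (F i) (x' ρ.1)‖ ^ 2)
      (μ.prod μ')) :
    (1 / (n : ℝ)) * ∑ i, ∫ ρ : Ω × Ω',
        ‖(g i ρ.1 + Q ρ.2 (gradient (F i) (x' ρ.1) - g i ρ.1)) - gradient (F i) (x' ρ.1)‖ ^ 2
        ∂(μ.prod μ') ≤
      (1 - α) * (1 + s) *
          ((1 / (n : ℝ)) * ∑ i, ∫ ς, ‖g i ς - gradient (F i) (x ς)‖ ^ 2 ∂μ) +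
      (1 - α) * (1 + 1 / s) * ((1 / (n : ℝ)) * ∑ i, (L i) ^ 2) *
          (∫ ς, ‖x' ς - x ς‖ ^ 2 ∂μ) := by
  have hα0 : (0:ℝ) ≤ 1 - α := by linarith [hα.2]
  have young : ∀ (a b : EuclideanSpace ℝ (Fin d)),
      ‖a + b‖ ^ 2 ≤ (1 + s) * ‖a‖ ^ 2 + (1 + 1 / s) * ‖b‖ ^ 2 := by
    intro a b
    have h := norm_add_le a b
    have hsq : ‖a + b‖ ^ 2 ≤ (‖a‖ + ‖b‖) ^ 2 := pow_le_pow_left₀ (norm_nonneg _) h 2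
    have key : 2 * ‖a‖ * ‖b‖ ≤ (s ^ 2 * ‖a‖ ^ 2 + ‖b‖ ^ 2) / s := by
      rw [le_div_iff₀ hs]; nlinarith [sq_nonneg (s * ‖a‖ - ‖b‖)]
    have heq : (s ^ 2 * ‖a‖ ^ 2 + ‖b‖ ^ 2) / s = s * ‖a‖ ^ 2 + (1 / s) * ‖b‖ ^ 2 := by
      field_simp
    rw [heq] at key
    nlinarith [hsq, key]
  have hkey : ∀ i : Fin n,
      (∫ ρ : Ω × Ω',
        ‖(g i ρ.1 + Q ρ.2 (gradient (F i) (x' ρ.1) - g i ρ.1)) - gradient (F i) (x' ρ.1)‖ ^ 2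
        ∂(μ.prod μ'))
      ≤ (1 - α) * (1 + s) * ∫ ς, ‖g i ς - gradient (F i) (x ς)‖ ^ 2 ∂μ
        + (1 - α) * (1 + 1 / s) * (L i) ^ 2 * ∫ ς, ‖x' ς - x ς‖ ^ 2 ∂μ := by
    intro i
    rw [MeasureTheory.integral_prod _ (hintG' i)]
    have hint1 : Integrable (fun ς =>
        (1 - α) * (1 + s) * ‖g i ς - gradient (F i) (x ς)‖ ^ 2
        + (1 - α) * (1 + 1 / s) * (L i) ^ 2 * ‖x' ς - x ς‖ ^ 2) μ :=
      ((hintG i).const_mul _).add (hintX.const_mul _)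
    have hle : ∀ ς : Ω,
        (∫ ς', ‖(g i ς + Q ς' (gradient (F i) (x' ς) - g i ς)) - gradient (F i) (x' ς)‖ ^ 2 ∂μ')
        ≤ (1 - α) * (1 + s) * ‖g i ς - gradient (F i) (x ς)‖ ^ 2
          + (1 - α) * (1 + 1 / s) * (L i) ^ 2 * ‖x' ς - x ς‖ ^ 2 := by
      intro ς
      set v : EuclideanSpace ℝ (Fin d) := gradient (F i) (x' ς) - g i ς with hv
      have heq : ∀ ς' : Ω',
          (g i ς + Q ς' v) - gradient (F i) (x' ς) = Q ς' v - v := by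
        intro ς'; rw [hv]; abel
      have h1 : (∫ ς', ‖(g i ς + Q ς' v) - gradient (F i) (x' ς)‖ ^ 2 ∂μ')
          ≤ (1 - α) * ‖v‖ ^ 2 := by
        simp_rw [heq]; exact hQ v
      refine h1.trans ?_
      set a : EuclideanSpace ℝ (Fin d) := g i ς - gradient (F i) (x ς) with ha
      set b : EuclideanSpace ℝ (Fin d) := gradient (F i) (x ς) - gradient (F i) (x' ς) with hb
      have hvab : v = -(a + b) := by rw [hv, ha, hb]; abel
      have hnv : ‖v‖ = ‖a + b‖ := by rw [hvab, norm_neg]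
      have hbL : ‖b‖ ^ 2 ≤ (L i) ^ 2 * ‖x' ς - x ς‖ ^ 2 := by
        have h2 : ‖b‖ ≤ L i * ‖x' ς - x ς‖ := by
          rw [hb]
          calc ‖gradient (F i) (x ς) - gradient (F i) (x' ς)‖
              ≤ L i * ‖x ς - x' ς‖ := hLip i _ _
            _ = L i * ‖x' ς - x ς‖ := by rw [norm_sub_rev]
        calc ‖b‖ ^ 2 ≤ (L i * ‖x' ς - x ς‖) ^ 2 := by
              exact pow_le_pow_left₀ (norm_nonneg _) h2 2
          _ = (L i) ^ 2 * ‖x' ς - x ς‖ ^ 2 := by ring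
      have hy := young a b
      have h1s : (0:ℝ) ≤ 1 + 1 / s := by positivity
      have hvb : ‖v‖ ^ 2 ≤ (1 + s) * ‖a‖ ^ 2 + (1 + 1 / s) * ((L i) ^ 2 * ‖x' ς - x ς‖ ^ 2) := by
        rw [hnv]
        exact hy.trans (by nlinarith)
      calc (1 - α) * ‖v‖ ^ 2
          ≤ (1 - α) * ((1 + s) * ‖a‖ ^ 2 + (1 + 1 / s) * ((L i) ^ 2 * ‖x' ς - x ς‖ ^ 2)) :=
            mul_le_mul_of_nonneg_left hvb hα0
        _ = (1 - α) * (1 + s) * ‖a‖ ^ 2 + (1 - α) * (1 + 1 / s) * (L i) ^ 2 * ‖x' ς - x ς‖ ^ 2 := by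
            ring
    have hmono := integral_mono (hintG' i).integral_prod_left hint1 hle
    rw [integral_add ((hintG i).const_mul _) (hintX.const_mul _),
      integral_const_mul, integral_const_mul] at hmono
    exact hmono
  have hn0 : (0:ℝ) ≤ 1 / (n:ℝ) := by positivity
  calc (1 / (n : ℝ)) * ∑ i, ∫ ρ : Ω × Ω',
        ‖(g i ρ.1 + Q ρ.2 (gradient (F i) (x' ρ.1) - g i ρ.1)) - gradient (F i) (x' ρ.1)‖ ^ 2
        ∂(μ.prod μ')
      ≤ (1 / (n : ℝ)) * ∑ i, ((1 - α) * (1 + s) * ∫ ς, ‖g i ς - gradient (F i) (x ς)‖ ^ 2 ∂μ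
        + (1 - α) * (1 + 1 / s) * (L i) ^ 2 * ∫ ς, ‖x' ς - x ς‖ ^ 2 ∂μ) :=
        mul_le_mul_of_nonneg_left (Finset.sum_le_sum fun i _ => hkey i) hn0
    _ = (1 - α) * (1 + s) *
          ((1 / (n : ℝ)) * ∑ i, ∫ ς, ‖g i ς - gradient (F i) (x ς)‖ ^ 2 ∂μ) +
        (1 - α) * (1 + 1 / s) * ((1 / (n : ℝ)) * ∑ i, (L i) ^ 2) *
          (∫ ς, ‖x' ς - x ς‖ ^ 2 ∂μ) := by
        rw [Finset.sum_add_distrib, mul_add]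
        congr 1
        · rw [← Finset.mul_sum]; ring
        · have hrw : ∀ i : Fin n,
              (1 - α) * (1 + 1 / s) * L i ^ 2 * (∫ ς, ‖x' ς - x ς‖ ^ 2 ∂μ)
              = L i ^ 2 * ((1 - α) * (1 + 1 / s) * ∫ ς, ‖x' ς - x ς‖ ^ 2 ∂μ) := fun i => by ring
          simp_rw [hrw]
          rw [← Finset.sum_mul]
          ring
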